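/- arXiv:1907.02206 — 2 statements merged into one kernel-verified Lean document; each statement's English description precedes it below -/
import Mathlib

section
/- If x* is an optimal solution of the MIQO, then x* is also a global minimizer of f over the reduced feasible set {x ∈ ℝⁿ : A_T x = b_T and x_i = x*_i for all i ∈ I}, where T is the set of tight constraints at x*; moreover the optimal value of this reduced equality-constrained quadratic program equals the optimal value of the MIQO. Hence, given the optimal strategy (T, x*_I), the MIQO solution can be recovered by solving the reduced convex problem. -/
/-!
Let `d = y - x` for a point `y` of the reduced set. Moving from `x` along `d` keeps the tight
constraints tight and the integer coordinates fixed, while the slack constraints stay satisfied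
for small steps, so `x + t • d` is feasible for the MIQO for all small `t > 0`. Along this ray
`f (x + t • d) = f x + t L + t² Q` with `Q = ½ dᵀPd ≥ 0`; optimality of `x` for small `t > 0`
forces `L ≥ 0`, and then `f y = f x + L + Q ≥ f x`.
-/

open Matrix Filter Topology

theorem Matrix.eventually_mulVec_add_smul_le {m n : Type*} [Fintype m] [Fintype n]
    {A : Matrix m n ℝ} {x d : n → ℝ} {b : m → ℝ} (hx : ∀ i, (A *ᵥ x) i ≤ b i)
    (hd : ∀ i, (A *ᵥ x) i = b i → (A *ᵥ d) i = 0) :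
    ∀ᶠ t in 𝓝 (0 : ℝ), ∀ i, (A *ᵥ (x + t • d)) i ≤ b i := by
  refine eventually_all.2 fun i => ?_
  have hline : ∀ t : ℝ, (A *ᵥ (x + t • d)) i = (A *ᵥ x) i + t * (A *ᵥ d) i := by
    simp [mulVec_add, mulVec_smul]
  simp only [hline]
  rcases (hx i).eq_or_lt with htight | hslack
  · exact .of_forall fun t => by simp [htight, hd i htight]
  · have hcont : Continuous fun t : ℝ => (A *ᵥ x) i + t * (A *ᵥ d) i := by fun_prop
    exact (hcont.tendsto' 0 _ (by simp)).eventually_lt_const hslack |>.mono fun _ => le_of_lt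

theorem nonneg_of_eventually_nonneg_mul_add_sq {L Q : ℝ}
    (h : ∀ᶠ t in 𝓝[>] (0 : ℝ), 0 ≤ t * L + t ^ 2 * Q) : 0 ≤ L := by
  have hlim : Tendsto (fun t : ℝ => L + t * Q) (𝓝[>] 0) (𝓝 L) :=
    ((continuous_const.add (continuous_id.mul continuous_const)).tendsto' 0 L (by simp)).mono_left
      nhdsWithin_le_nhds
  refine ge_of_tendsto hlim ((h.and self_mem_nhdsWithin).mono fun t ⟨hnonneg, htpos⟩ => ?_)
  exact nonneg_of_mul_nonneg_right (by linarith : 0 ≤ t * (L + t * Q)) htpos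

theorem quadratic_add_smul {n : Type*} [Fintype n] (P : Matrix n n ℝ) (q x d : n → ℝ) (t : ℝ) :
    (1 / 2) * ((x + t • d) ⬝ᵥ P *ᵥ (x + t • d)) + q ⬝ᵥ (x + t • d) =
      (1 / 2) * (x ⬝ᵥ P *ᵥ x) + q ⬝ᵥ x + t * ((1 / 2) * (d ⬝ᵥ P *ᵥ x + x ⬝ᵥ P *ᵥ d) + q ⬝ᵥ d) +
        t ^ 2 * ((1 / 2) * (d ⬝ᵥ P *ᵥ d)) := by
  simp only [mulVec_add, mulVec_smul, dotProduct_add, add_dotProduct, dotProduct_smul,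
    smul_dotProduct, smul_eq_mul]
  ring

/-- **MIQO solution recovery from the optimal strategy.**
Let `f(x) = (1/2) xᵀPx + qᵀx` with `P` symmetric positive semidefinite, and consider the
mixed-integer quadratic optimization problem: minimize `f(x)` subject to `Ax ≤ b` and
`x_i ∈ ℤ` for all `i ∈ I`.  If `x` is an optimal solution, then `x` is also a global
minimizer of `f` over the reduced feasible set
`{y : A_T y = b_T and y_i = x_i for all i ∈ I}`, where `T = {i : (Ax)_i = b_i}` is the set
of tight constraints at `x`; moreover, the optimal value of this reduced equality-constrained
quadratic program equals the optimal value `f x` of the MIQO. -/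
theorem miqo_reduced_problem_recovery
    {n m : ℕ} (P : Matrix (Fin n) (Fin n) ℝ) (hP : P.PosSemidef)
    (q : Fin n → ℝ) (A : Matrix (Fin m) (Fin n) ℝ) (b : Fin m → ℝ)
    (I : Finset (Fin n))
    (f : (Fin n → ℝ) → ℝ)
    (hf : ∀ y, f y = (1 / 2) * (y ⬝ᵥ P.mulVec y) + q ⬝ᵥ y)
    (x : Fin n → ℝ)
    (hxfeas : ∀ i, A.mulVec x i ≤ b i)
    (hxint : ∀ i ∈ I, ∃ z : ℤ, x i = (z : ℝ))
    (hopt : ∀ y : Fin n → ℝ, (∀ i, A.mulVec y i ≤ b i) →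
      (∀ i ∈ I, ∃ z : ℤ, y i = (z : ℝ)) → f x ≤ f y) :
    IsLeast (f '' {y | (∀ i, A.mulVec x i = b i → A.mulVec y i = b i) ∧
      ∀ i ∈ I, y i = x i}) (f x) := by
  refine ⟨⟨x, ⟨fun _ h => h, fun _ _ => rfl⟩, rfl⟩, ?_⟩
  rintro _ ⟨y, ⟨hyT, hyI⟩, rfl⟩
  set d := y - x
  set L := (1 / 2) * (d ⬝ᵥ P *ᵥ x + x ⬝ᵥ P *ᵥ d) + q ⬝ᵥ d
  set Q := (1 / 2) * (d ⬝ᵥ P *ᵥ d)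
  have hray : ∀ t : ℝ, f (x + t • d) = f x + t * L + t ^ 2 * Q := fun t => by
    rw [hf, hf, quadratic_add_smul]
  have hfeas : ∀ᶠ t in 𝓝 (0 : ℝ), ∀ i, (A *ᵥ (x + t • d)) i ≤ b i :=
    eventually_mulVec_add_smul_le hxfeas fun i hi => by simp [d, mulVec_sub, hi, hyT i hi]
  have hint (t : ℝ) : ∀ i ∈ I, ∃ z : ℤ, (x + t • d) i = z := fun i hi => by
    simpa [d, hyI i hi] using hxint i hi
  have hL : 0 ≤ L := nonneg_of_eventually_nonneg_mul_add_sq (Q := Q) <|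
    (hfeas.filter_mono nhdsWithin_le_nhds).mono fun t ht => by
      linarith [hray t ▸ hopt _ ht (hint t)]
  have hQ : 0 ≤ Q := mul_nonneg (by norm_num) (by simpa using hP.dotProduct_mulVec_nonneg d)
  calc f x ≤ f x + 1 * L + 1 ^ 2 * Q := by linarith
    _ = f y := by rw [← hray, one_smul, add_sub_cancel]
end

section
/- The KKT matrix [[P, Cᵀ],[C, 0]] ∈ ℝ^{(n+k)×(n+k)} is invertible if and only if C has full row rank (rank C = k). Consequently, when C has full row rank, for every q ∈ ℝⁿ and d ∈ ℝᵏ the KKT linear system [[P, Cᵀ],[C, 0]](x, ν) = (−q, d) has a unique solution, whose x-component is the unique global minimizer of (1/2)xᵀPx + qᵀx over {x ∈ ℝⁿ : Cx = d}. -/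
/-!
If `(x, ν)` is in the kernel of the KKT matrix, then `Px + Cᵀν = 0` and `Cx = 0`, so
`xᵀPx = -xᵀCᵀν = -(Cx)ᵀν = 0`; positive definiteness forces `x = 0`, and then `Cᵀν = 0`.
Hence the KKT matrix is injective exactly when `Cᵀ` is, i.e. when the rows of `C` are linearly
independent. For optimality, write a feasible point as `x + h` with `Ch = 0`: the objective
changes by `hᵀ(Px + q) + ½ hᵀPh`, the linear term equals `-(Ch)ᵀν = 0` by stationarity, and
`½ hᵀPh > 0` unless `h = 0`.
-/

open Matrix

namespace Matrix

variable {m n : Type*} [Fintype m] [Fintype n]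

theorem rank_eq_card_height_iff_mulVec_transpose_injective {K : Type*} [Field K]
    (C : Matrix m n K) : C.rank = Fintype.card m ↔ Function.Injective Cᵀ.mulVec := by
  rw [mulVec_injective_iff, col_transpose, linearIndependent_iff_card_eq_finrank_span,
    rank_eq_finrank_span_row, Set.finrank, eq_comm]

theorem existsUnique_mulVec_sumElim_eq_of_isUnit {K : Type*} [Field K] [DecidableEq m]
    [DecidableEq n] {M : Matrix (n ⊕ m) (n ⊕ m) K} (hM : IsUnit M) (b : n ⊕ m → K) :
    ∃! z : (n → K) × (m → K), M *ᵥ Sum.elim z.1 z.2 = b := by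
  have hbij : Function.Bijective M.mulVec :=
    ⟨mulVec_injective_iff_isUnit.mpr hM, mulVec_surjective_iff_isUnit.mpr hM⟩
  exact (hbij.comp (Equiv.sumArrowEquivProdArrow n m K).symm.bijective).existsUnique b

theorem IsSymm.dotProduct_mulVec_comm {R : Type*} [CommSemiring R] {A : Matrix n n R}
    (hA : A.IsSymm) (x y : n → R) : x ⬝ᵥ A *ᵥ y = y ⬝ᵥ A *ᵥ x := by
  rw [← hA.eq, dotProduct_transpose_mulVec, hA.eq]

theorem IsSymm.quadratic_add {P : Matrix n n ℝ} (hP : P.IsSymm) (q x h : n → ℝ) :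
    1 / 2 * ((x + h) ⬝ᵥ P *ᵥ (x + h)) + q ⬝ᵥ (x + h) =
      1 / 2 * (x ⬝ᵥ P *ᵥ x) + q ⬝ᵥ x + h ⬝ᵥ (P *ᵥ x + q) + 1 / 2 * (h ⬝ᵥ P *ᵥ h) := by
  simp only [mulVec_add, dotProduct_add, add_dotProduct, hP.dotProduct_mulVec_comm x h,
    dotProduct_comm q]
  ring

def kktMatrix {R : Type*} [Zero R] (P : Matrix n n R) (C : Matrix m n R) :
    Matrix (n ⊕ m) (n ⊕ m) R :=
  fromBlocks P Cᵀ C 0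

theorem kktMatrix_mulVec_sumElim {R : Type*} [NonUnitalNonAssocSemiring R]
    (P : Matrix n n R) (C : Matrix m n R) (x : n → R) (ν : m → R) :
    kktMatrix P C *ᵥ Sum.elim x ν = Sum.elim (P *ᵥ x + Cᵀ *ᵥ ν) (C *ᵥ x) := by
  simp [kktMatrix, fromBlocks_mulVec]

variable {P : Matrix n n ℝ}

theorem kktMatrix_mulVec_injective_iff (hP : P.PosDef) (C : Matrix m n ℝ) :
    Function.Injective (kktMatrix P C).mulVec ↔ Function.Injective Cᵀ.mulVec := by
  constructor
  · intro hM ν ν' h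
    have := @hM (Sum.elim 0 ν) (Sum.elim 0 ν') (by simp [kktMatrix_mulVec_sumElim, h])
    exact (Sum.elim_eq_iff.mp this).2
  · intro hC
    rw [← coe_mulVecLin, ← LinearMap.ker_eq_bot, ker_mulVecLin_eq_bot_iff]
    intro v hv
    rw [← Sum.elim_comp_inl_inr v] at hv ⊢
    set x := v ∘ Sum.inl
    set ν := v ∘ Sum.inr
    rw [kktMatrix_mulVec_sumElim, ← Sum.elim_zero_zero, Sum.elim_eq_iff] at hv
    obtain ⟨hstat, hfeas⟩ := hv
    have hx : x = 0 := by
      by_contra hx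
      have hpos : 0 < x ⬝ᵥ P *ᵥ x := by simpa using hP.dotProduct_mulVec_pos hx
      have hzero : x ⬝ᵥ P *ᵥ x = 0 := by
        simpa [dotProduct_add, dotProduct_transpose_mulVec, hfeas] using
          congrArg (x ⬝ᵥ ·) hstat
      exact hpos.ne' hzero
    have hν : ν = 0 := hC (by rw [mulVec_zero, ← hstat, hx, mulVec_zero, zero_add])
    rw [hx, hν, Sum.elim_zero_zero]

theorem isUnit_kktMatrix_iff [DecidableEq m] [DecidableEq n] (hP : P.PosDef)
    (C : Matrix m n ℝ) : IsUnit (kktMatrix P C) ↔ C.rank = Fintype.card m := by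
  rw [← mulVec_injective_iff_isUnit, kktMatrix_mulVec_injective_iff hP,
    rank_eq_card_height_iff_mulVec_transpose_injective]

theorem PosDef.quadratic_lt_of_kkt (hP : P.PosDef) {C : Matrix m n ℝ} {q x y : n → ℝ}
    {ν : m → ℝ} (hstat : P *ᵥ x + Cᵀ *ᵥ ν = -q) (hy : C *ᵥ y = C *ᵥ x) (hne : y ≠ x) :
    1 / 2 * (x ⬝ᵥ P *ᵥ x) + q ⬝ᵥ x < 1 / 2 * (y ⬝ᵥ P *ᵥ y) + q ⬝ᵥ y := by
  obtain ⟨h, rfl⟩ : ∃ h, y = x + h := ⟨y - x, by abel⟩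
  have hh : h ≠ 0 := by simpa using hne
  have hCh : C *ᵥ h = 0 := by simpa [mulVec_add] using hy
  have hlin : h ⬝ᵥ (P *ᵥ x + q) = 0 := by
    rw [show P *ᵥ x + q = -(Cᵀ *ᵥ ν) by rw [← neg_neg q, ← hstat]; abel, dotProduct_neg,
      dotProduct_transpose_mulVec, hCh, dotProduct_zero, neg_zero]
  have hpos : 0 < h ⬝ᵥ P *ᵥ h := by simpa using hP.dotProduct_mulVec_pos hh
  rw [(isHermitian_iff_isSymm.mp hP.isHermitian).quadratic_add, hlin]
  linarith

end Matrix

/-- **Invertibility of the KKT matrix.**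
Let `P` be symmetric positive definite and `C ∈ ℝ^{k×n}`.  The KKT matrix
`[[P, Cᵀ],[C, 0]]` is invertible if and only if `C` has full row rank (`rank C = k`).
Consequently, when `C` has full row rank, for every `q` and `d` the KKT linear system
`[[P, Cᵀ],[C, 0]] (x, ν) = (-q, d)` has a unique solution, whose `x`-component is the
unique global minimizer of `(1/2) xᵀPx + qᵀx` over `{x : Cx = d}`. -/
theorem kkt_matrix_invertible_iff_full_row_rank
    {n k : ℕ} (P : Matrix (Fin n) (Fin n) ℝ) (hP : P.PosDef)
    (C : Matrix (Fin k) (Fin n) ℝ) :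
    (IsUnit (Matrix.fromBlocks P Cᵀ C (0 : Matrix (Fin k) (Fin k) ℝ)) ↔ C.rank = k) ∧
    (C.rank = k → ∀ (q : Fin n → ℝ) (d : Fin k → ℝ),
      (∃! z : (Fin n → ℝ) × (Fin k → ℝ),
        (Matrix.fromBlocks P Cᵀ C (0 : Matrix (Fin k) (Fin k) ℝ)).mulVec
            (Sum.elim z.1 z.2) = Sum.elim (-q) d) ∧
      (∀ z : (Fin n → ℝ) × (Fin k → ℝ),
        (Matrix.fromBlocks P Cᵀ C (0 : Matrix (Fin k) (Fin k) ℝ)).mulVec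
            (Sum.elim z.1 z.2) = Sum.elim (-q) d →
        C.mulVec z.1 = d ∧
        ∀ y : Fin n → ℝ, C.mulVec y = d → y ≠ z.1 →
          (1 / 2) * (z.1 ⬝ᵥ P.mulVec z.1) + q ⬝ᵥ z.1 <
            (1 / 2) * (y ⬝ᵥ P.mulVec y) + q ⬝ᵥ y)) := by
  have hunit : IsUnit (kktMatrix P C) ↔ C.rank = k := by
    rw [isUnit_kktMatrix_iff hP, Fintype.card_fin]
  refine ⟨hunit, fun hC q d => ⟨existsUnique_mulVec_sumElim_eq_of_isUnit (hunit.mpr hC) _,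
    fun ⟨x, ν⟩ hxν => ?_⟩⟩
  obtain ⟨hstat, hfeas⟩ := Sum.elim_eq_iff.mp ((kktMatrix_mulVec_sumElim P C x ν).symm.trans hxν)
  exact ⟨hfeas, fun y hy hne => hP.quadratic_lt_of_kkt hstat (hy.trans hfeas.symm) hne⟩
end
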